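/- arXiv:1802.03552 — 6 statements merged into one kernel-verified Lean document; each statement's English description precedes it below -/
import Mathlib

section
/- The subgroup commutativity degree of the dihedral group $D_8$ of order 8 equals $23/25$. -/
open scoped Pointwise

/-- The subgroup commutativity degree of a group: the probability that two
subgroups permute (their setwise product in either order is equal). -/
noncomputable def sd (G : Type*) [Group G] : ℚ :=
  (Nat.card {pr : Subgroup G × Subgroup G //
      (pr.1 : Set G) * (pr.2 : Set G) = (pr.2 : Set G) * (pr.1 : Set G)} : ℚ) /
    (Nat.card (Subgroup G) : ℚ) ^ 2

/-!
Of the ten subgroups of `D₈`, all but the four generated by a single reflection are normal, and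
hence permute with every subgroup. Two reflection subgroups `⟨srⁱ⟩` and `⟨srʲ⟩` permute exactly
when the reflections commute, i.e. when `i ≡ j [MOD 2]`; this rules out `8` of the `100` ordered
pairs. Formally the count is a finite computation: subgroups of a finite group are encoded as
finsets closed under the group operations, on which both counts are decidable.
-/

namespace Finset

variable {G : Type*} [Group G]

def IsSubgroupCarrier (s : Finset G) : Prop :=
  (1 : G) ∈ s ∧ (∀ a ∈ s, ∀ b ∈ s, a * b ∈ s) ∧ ∀ a ∈ s, a⁻¹ ∈ s

instance [DecidableEq G] : DecidablePred (IsSubgroupCarrier (G := G)) :=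
  fun _ => inferInstanceAs (Decidable (_ ∧ _ ∧ _))

end Finset

namespace Subgroup

variable {G : Type*} [Group G] [Finite G]

noncomputable def equivSubgroupCarrier : Subgroup G ≃ {s : Finset G // s.IsSubgroupCarrier} where
  toFun H := ⟨(H : Set G).toFinite.toFinset, by
    simp only [Finset.IsSubgroupCarrier, Set.Finite.mem_toFinset, SetLike.mem_coe]
    exact ⟨H.one_mem, fun _ ha _ hb => H.mul_mem ha hb, fun _ ha => H.inv_mem ha⟩⟩
  invFun s :=
    { carrier := s.1
      one_mem' := s.2.1
      mul_mem' := fun ha hb => s.2.2.1 _ ha _ hb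
      inv_mem' := fun ha => s.2.2.2 _ ha }
  left_inv H := by ext; simp
  right_inv s := by ext; simp

@[simp]
theorem coe_equivSubgroupCarrier (H : Subgroup G) :
    ((equivSubgroupCarrier H : Finset G) : Set G) = H := by
  simp [equivSubgroupCarrier]

noncomputable def permutingPairsEquiv [DecidableEq G] :
    {pr : Subgroup G × Subgroup G // (pr.1 : Set G) * pr.2 = pr.2 * pr.1} ≃
      {p : {s : Finset G // s.IsSubgroupCarrier} × {s : Finset G // s.IsSubgroupCarrier} //
        p.1.1 * p.2.1 = p.2.1 * p.1.1} :=
  Equiv.subtypeEquiv (equivSubgroupCarrier.prodCongr equivSubgroupCarrier) fun _ => by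
    simp only [Equiv.prodCongr_apply, Prod.map_fst, Prod.map_snd, ← Finset.coe_inj,
      Finset.coe_mul, coe_equivSubgroupCarrier]

end Subgroup

theorem card_subgroup_dihedralGroup_four : Nat.card (Subgroup (DihedralGroup 4)) = 10 := by
  rw [Nat.card_congr Subgroup.equivSubgroupCarrier, Nat.card_eq_fintype_card]
  decide

theorem card_permutingPairs_dihedralGroup_four :
    Nat.card {pr : Subgroup (DihedralGroup 4) × Subgroup (DihedralGroup 4) //
      (pr.1 : Set (DihedralGroup 4)) * pr.2 = pr.2 * pr.1} = 92 := by
  rw [Nat.card_congr Subgroup.permutingPairsEquiv, Nat.card_eq_fintype_card]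
  set_option maxRecDepth 10000 in decide

theorem sd_dihedralGroup_four : sd (DihedralGroup 4) = 23 / 25 := by
  rw [sd, card_permutingPairs_dihedralGroup_four, card_subgroup_dihedralGroup_four]
  norm_num
end

section
/- For every odd prime $r$, the subgroup commutativity degree of the dihedral group $D_{2r}$ of order $2r$ equals $\frac{7r + 9}{(r+3)^2}$. -/
open scoped Pointwise

/-!
By Lagrange, a subgroup of `D_{2p}` has order `1`, `2`, `p` or `2p`; for `p` an odd prime this
forces it to be `⊥`, one of the `p` reflection subgroups `⟨sr i⟩`, the rotation subgroup, or `⊤`.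
All of these except the reflection subgroups are normal, and a normal subgroup permutes with every
subgroup. Two distinct reflection subgroups never permute, since `2` is invertible mod `p`. So the
non-permuting pairs are exactly the `p² - p` ordered pairs of distinct reflection subgroups, and
`(p + 3)² - (p² - p) = 7p + 9`.
-/

theorem Set.ncard_offDiag {α : Type*} {s : Set α} (hs : s.Finite) :
    s.offDiag.ncard = s.ncard * s.ncard - s.ncard := by
  rw [← hs.coe_toFinset, ← Finset.coe_offDiag, Set.ncard_coe_finset, Set.ncard_coe_finset,
    Finset.offDiag_card]

theorem Subgroup.exists_eq_zpowers_of_prime_card {G : Type*} [Group G] {H : Subgroup G}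
    (hH : (Nat.card H).Prime) : ∃ g, H = Subgroup.zpowers g ∧ orderOf g = Nat.card H := by
  have : Finite H := Nat.finite_of_card_ne_zero hH.ne_zero
  obtain ⟨g, hg, hg1⟩ := H.bot_or_exists_ne_one.resolve_left fun h ↦ by
    simp [h, Nat.not_prime_one] at hH
  have horder : orderOf g = Nat.card H :=
    ((Nat.dvd_prime hH).mp (H.orderOf_dvd_natCard hg)).resolve_left
      (orderOf_eq_one_iff.not.mpr hg1)
  refine ⟨g, (Subgroup.eq_of_le_of_card_ge (Subgroup.zpowers_le.mpr hg) ?_).symm, horder⟩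
  rw [Nat.card_zpowers, horder]

namespace DihedralGroup

open Subgroup

variable {n : ℕ}

def rotations (n : ℕ) : Subgroup (DihedralGroup n) := zpowers (r 1)

theorem r_mem_rotations (i : ZMod n) : r i ∈ rotations n :=
  ⟨i.cast, by simp⟩

theorem card_rotations : Nat.card (rotations n) = n := by
  rw [rotations, Nat.card_zpowers, orderOf_r_one]

theorem index_rotations [NeZero n] : (rotations n).index = 2 := by
  have h := (rotations n).index_mul_card
  rw [card_rotations, nat_card] at h
  exact Nat.eq_of_mul_eq_mul_right (Nat.pos_of_neZero n) h

instance [NeZero n] : (rotations n).Normal := normal_of_index_eq_two index_rotations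

theorem card_zpowers_sr (i : ZMod n) : Nat.card (zpowers (sr i)) = 2 := by
  rw [Nat.card_zpowers, orderOf_sr]

theorem mem_zpowers_sr {i : ZMod n} {x : DihedralGroup n} :
    x ∈ zpowers (sr i) ↔ x = 1 ∨ x = sr i := by
  constructor
  · rintro ⟨k, rfl⟩
    dsimp only
    rw [← zpow_mod_orderOf, orderOf_sr]
    rcases Int.emod_two_eq k with h | h <;> simp [h]
  · rintro (rfl | rfl)
    · exact one_mem _
    · exact mem_zpowers _

theorem zpowers_sr_injective : Function.Injective fun i : ZMod n ↦ zpowers (sr i) := by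
  intro i j h
  have : sr i ∈ zpowers (sr j) := (congrArg (sr i ∈ ·) h).mp (mem_zpowers (sr i))
  simpa [mem_zpowers_sr, ← r_zero] using this

theorem zpowers_sr_mul_comm_iff (hn : Odd n) {i j : ZMod n} :
    (zpowers (sr i) : Set (DihedralGroup n)) * zpowers (sr j) =
      (zpowers (sr j) : Set (DihedralGroup n)) * zpowers (sr i) ↔ i = j := by
  refine ⟨fun h ↦ ?_, fun h ↦ h ▸ rfl⟩
  -- `sr i * sr j = r (j - i)`, while the rotations in `⟨sr j⟩⟨sr i⟩` are `1` and `r (i - j)`.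
  have hmem : r (j - i) ∈ (zpowers (sr j) : Set (DihedralGroup n)) * zpowers (sr i) :=
    h ▸ sr_mul_sr i j ▸ Set.mul_mem_mul (mem_zpowers _) (mem_zpowers _)
  obtain ⟨x, hx, y, hy, hxy⟩ := hmem
  rw [SetLike.mem_coe, mem_zpowers_sr] at hx hy
  rcases hx with rfl | rfl <;> rcases hy with rfl | rfl <;>
    simp only [one_mul, mul_one, sr_mul_sr] at hxy
  · rw [← r_zero, r.injEq] at hxy
    exact (sub_eq_zero.mp hxy.symm).symm
  · cases hxy
  · cases hxy
  · rw [r.injEq] at hxy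
    rw [← sub_eq_zero, ← ZMod.add_self_eq_zero_iff_eq_zero hn]
    linear_combination hxy

theorem orderOf_r_dvd (i : ZMod n) : orderOf (r i) ∣ n :=
  orderOf_dvd_of_pow_eq_one (by simp [r_pow])

theorem eq_rotations_of_card_eq (hp : n.Prime) (hn : Odd n) {H : Subgroup (DihedralGroup n)}
    (hH : Nat.card H = n) : H = rotations n := by
  obtain ⟨g, rfl, hg⟩ := exists_eq_zpowers_of_prime_card (hH ▸ hp)
  rcases g with i | i
  · have : Finite (rotations n) := Nat.finite_of_card_ne_zero (card_rotations.trans_ne hp.ne_zero)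
    exact eq_of_le_of_card_ge (zpowers_le.mpr (r_mem_rotations i)) (by rw [hH, card_rotations])
  · rw [orderOf_sr, hH] at hg
    exact absurd (hg ▸ hn) (by decide)

theorem exists_eq_zpowers_sr_of_card_eq_two (hn : Odd n) {H : Subgroup (DihedralGroup n)}
    (hH : Nat.card H = 2) : ∃ i, H = zpowers (sr i) := by
  obtain ⟨g, rfl, hg⟩ := exists_eq_zpowers_of_prime_card (hH ▸ Nat.prime_two)
  rcases g with i | i
  · rw [hH] at hg
    exact absurd (hg ▸ orderOf_r_dvd i) hn.not_two_dvd_nat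
  · exact ⟨i, rfl⟩

section OddPrime

variable {p : ℕ}

theorem eq_bot_or_rotations_or_top_or_zpowers_sr (hp : p.Prime) (hodd : Odd p)
    (H : Subgroup (DihedralGroup p)) :
    H = ⊥ ∨ H = rotations p ∨ H = ⊤ ∨ ∃ i, H = zpowers (sr i) := by
  have : NeZero p := ⟨hp.ne_zero⟩
  obtain ⟨a, b, ha, hb, hab⟩ := Nat.dvd_mul.mp (nat_card (n := p) ▸ H.card_subgroup_dvd_card)
  rcases (Nat.dvd_prime Nat.prime_two).mp ha with rfl | rfl <;>
    rcases (Nat.dvd_prime hp).mp hb with rfl | rfl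
  · exact .inl (eq_bot_of_card_eq H (by rw [← hab]))
  · exact .inr <| .inl <| eq_rotations_of_card_eq hp hodd (by rw [← hab, one_mul])
  · exact .inr <| .inr <| .inr <| exists_eq_zpowers_sr_of_card_eq_two hodd (by rw [← hab])
  · exact .inr <| .inr <| .inl <| (card_eq_iff_eq_top H).mp (by rw [← hab, nat_card])

theorem normal_or_mem_range_zpowers_sr (hp : p.Prime) (hodd : Odd p)
    (H : Subgroup (DihedralGroup p)) : H.Normal ∨ H ∈ Set.range fun i ↦ zpowers (sr i) := by
  have : NeZero p := ⟨hp.ne_zero⟩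
  rcases eq_bot_or_rotations_or_top_or_zpowers_sr hp hodd H with rfl | rfl | rfl | ⟨i, rfl⟩
  · exact .inl inferInstance
  · exact .inl inferInstance
  · exact .inl inferInstance
  · exact .inr ⟨i, rfl⟩

theorem compl_range_zpowers_sr (hp : p.Prime) (hodd : Odd p) :
    (Set.range fun i ↦ zpowers (sr i))ᶜ = {⊥, rotations p, ⊤} := by
  ext H
  simp only [Set.mem_compl_iff, Set.mem_range, Set.mem_insert_iff, Set.mem_singleton_iff]
  constructor
  · intro hH
    rcases eq_bot_or_rotations_or_top_or_zpowers_sr hp hodd H with h | h | h | h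
    · exact .inl h
    · exact .inr (.inl h)
    · exact .inr (.inr h)
    · exact absurd (h.imp fun i ↦ Eq.symm) hH
  · rintro hH ⟨i, rfl⟩
    have h2 := card_zpowers_sr i
    rcases hH with h | h | h <;> rw [h] at h2
    · simp at h2
    · rw [card_rotations] at h2
      exact absurd (h2 ▸ hodd) (by decide)
    · rw [card_top, nat_card] at h2
      exact hp.ne_one (by omega)

theorem card_subgroup (hp : p.Prime) (hodd : Odd p) :
    Nat.card (Subgroup (DihedralGroup p)) = p + 3 := by
  have : NeZero p := ⟨hp.ne_zero⟩
  rw [← Set.ncard_add_ncard_compl (Set.range fun i ↦ zpowers (sr i)),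
    Set.ncard_range_of_injective zpowers_sr_injective, Nat.card_zmod,
    compl_range_zpowers_sr hp hodd]
  rw [Set.ncard_eq_three.mpr ⟨⊥, rotations p, ⊤, ?_, bot_ne_top, ?_, rfl⟩]
  · refine ne_of_apply_ne (fun H : Subgroup _ ↦ Nat.card H) ?_
    rw [card_bot, card_rotations]
    exact hp.ne_one.symm
  · refine ne_of_apply_ne (fun H : Subgroup _ ↦ Nat.card H) ?_
    rw [card_rotations, card_top, nat_card]
    have := hp.pos
    omega

theorem setOf_mul_comm_eq_compl_offDiag (hp : p.Prime) (hodd : Odd p) :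
    {pr : Subgroup (DihedralGroup p) × Subgroup (DihedralGroup p) |
      (pr.1 : Set (DihedralGroup p)) * pr.2 = pr.2 * pr.1} =
      (Set.range fun i ↦ zpowers (sr i)).offDiagᶜ := by
  ext ⟨H, K⟩
  rw [Set.mem_ofPred_eq, Set.mem_compl_iff, Set.mem_offDiag]
  constructor
  · rintro h ⟨⟨i, rfl⟩, ⟨j, rfl⟩, hne⟩
    exact hne (by rw [(zpowers_sr_mul_comm_iff hodd).mp h])
  · intro h
    rcases normal_or_mem_range_zpowers_sr hp hodd H with hH | hH
    · exact (set_mul_normal_comm K H).symm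
    rcases normal_or_mem_range_zpowers_sr hp hodd K with hK | hK
    · exact set_mul_normal_comm H K
    rw [show H = K by by_contra hne; exact h ⟨hH, hK, hne⟩]

theorem card_mul_comm_pairs (hp : p.Prime) (hodd : Odd p) :
    Nat.card {pr : Subgroup (DihedralGroup p) × Subgroup (DihedralGroup p) //
      (pr.1 : Set (DihedralGroup p)) * pr.2 = pr.2 * pr.1} = 7 * p + 9 := by
  have : NeZero p := ⟨hp.ne_zero⟩
  have hfin := (Set.finite_range fun i : ZMod p ↦ zpowers (sr i)).offDiag
  change Nat.card {pr : Subgroup (DihedralGroup p) × Subgroup (DihedralGroup p) |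
      (pr.1 : Set (DihedralGroup p)) * pr.2 = pr.2 * pr.1} = 7 * p + 9
  rw [setOf_mul_comm_eq_compl_offDiag hp hodd, Nat.card_coe_set_eq, Set.ncard_compl _ hfin,
    Nat.card_prod, card_subgroup hp hodd, Set.ncard_offDiag (Set.finite_range _),
    Set.ncard_range_of_injective zpowers_sr_injective, Nat.card_zmod]
  have hp_le := Nat.le_mul_self p
  have hsq : (p + 3) * (p + 3) = p * p + 6 * p + 9 := by ring
  omega

end OddPrime

end DihedralGroup

theorem sd_dihedralGroup_odd_prime (r : ℕ) (hr : r.Prime) (hodd : Odd r) :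
    sd (DihedralGroup r) = (7 * r + 9) / (r + 3) ^ 2 := by
  rw [sd, DihedralGroup.card_mul_comm_pairs hr hodd, DihedralGroup.card_subgroup hr hodd]
  push_cast
  ring
end

section
/- Let $S_1 = P_1 \rtimes Q_1$ where $P_1$ is an elementary abelian $p$-group of order $p^r$, $Q_1$ is cyclic of order $q$ (distinct primes $p, q$), $Q_1$ acts on $P_1$ so that $P_1$ is a minimal normal subgroup of $S_1$ and all proper subgroups of $S_1$ are nilpotent (i.e., $S_1$ is a Schmidt group). Then $S_1$ has no subgroup of order $p^i q$ for any $1 \leq i \leq r-1$. -/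
open scoped Pointwise

variable {G : Type*} [Group G] [Finite G] {p q r : ℕ} {P Q : Subgroup G}

/-! A subgroup `H` of order `p ^ i * q` with `i < r` is proper, hence nilpotent, so it contains
commuting elements `x` of order `p` and `z` of order `q`. Then `x ∈ P` and `P ⊔ ⟨z⟩ = G`; as `P` is
abelian, `x` is central in `G`. So `⟨x⟩` is a nontrivial normal subgroup of `P`, and minimality
forces `P = ⟨x⟩`, i.e. `r = 1`, leaving no room for `i`. -/

namespace Subgroup

theorem isComplement'_of_isCompl_of_normal {G : Type*} [Group G] {N K : Subgroup G} [N.Normal]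
    (h : IsCompl N K) : IsComplement' N K :=
  isComplement'_of_disjoint_and_mul_eq_univ h.disjoint
    (by rw [← normal_mul, h.sup_eq_top, coe_top])

theorem normal_of_le_center {G : Type*} [Group G] {N : Subgroup G} (h : N ≤ center G) :
    N.Normal :=
  ⟨fun n hn g => by rwa [mem_center_iff.mp (h hn) g, mul_inv_cancel_right]⟩

theorem mem_center_of_sup_eq_top {G : Type*} [Group G] {A K : Subgroup G} (h : A ⊔ K = ⊤)
    {x : G} (hA : ∀ a ∈ A, Commute a x) (hK : ∀ k ∈ K, Commute k x) : x ∈ center G := by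
  have : A ⊔ K ≤ centralizer {x} :=
    sup_le (fun a ha => mem_centralizer_singleton_iff.mpr (hA a ha))
      (fun k hk => mem_centralizer_singleton_iff.mpr (hK k hk))
  rw [h, top_le_iff, centralizer_eq_top_iff_subset, Set.singleton_subset_iff] at this
  exact this

end Subgroup

theorem IsPGroup.le_of_normal_of_not_dvd_index {G : Type*} [Group G] [Finite G] {p : ℕ}
    [Fact p.Prime] {N K : Subgroup G} (hN : IsPGroup p N) (hNn : N.Normal)
    (hindex : ¬ p ∣ N.index) (hK : IsPGroup p K) : K ≤ N := by
  obtain ⟨T, hKT⟩ := hK.exists_le_sylow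
  have := Sylow.unique_of_normal (hN.toSylow hindex) hNn
  rwa [Subsingleton.elim T (hN.toSylow hindex)] at hKT

theorem IsPGroup.commute_of_isNilpotent {G : Type*} [Group G] [Finite G] [Group.IsNilpotent G]
    {p q : ℕ} [Fact p.Prime] [Fact q.Prime] {A B : Subgroup G} (hA : IsPGroup p A)
    (hB : IsPGroup q B) (hpq : p ≠ q) {x y : G} (hx : x ∈ A) (hy : y ∈ B) : Commute x y := by
  obtain ⟨S, hAS⟩ := hA.exists_le_sylow
  obtain ⟨T, hBT⟩ := hB.exists_le_sylow
  exact Subgroup.commute_of_normal_of_disjoint S T inferInstance inferInstance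
    (IsPGroup.disjoint_of_ne p q hpq _ _ S.isPGroup' T.isPGroup') x y (hAS hx) (hBT hy)

theorem isPGroup_zpowers_of_orderOf_eq {G : Type*} [Group G] {p : ℕ} {x : G}
    (hx : orderOf x = p) : IsPGroup p (Subgroup.zpowers x) :=
  IsPGroup.of_card (n := 1) (by rw [Nat.card_zpowers, hx, pow_one])

theorem exists_commute_orderOf_eq_of_isNilpotent {G : Type*} [Group G] [Finite G]
    [Group.IsNilpotent G] {p q : ℕ} [Fact p.Prime] [Fact q.Prime] (hpq : p ≠ q)
    (hp : p ∣ Nat.card G) (hq : q ∣ Nat.card G) :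
    ∃ x y : G, orderOf x = p ∧ orderOf y = q ∧ Commute x y := by
  obtain ⟨x, hx⟩ := exists_prime_orderOf_dvd_card' p hp
  obtain ⟨y, hy⟩ := exists_prime_orderOf_dvd_card' q hq
  exact ⟨x, y, hx, hy, (isPGroup_zpowers_of_orderOf_eq hx).commute_of_isNilpotent
    (isPGroup_zpowers_of_orderOf_eq hy) hpq (Subgroup.mem_zpowers x) (Subgroup.mem_zpowers y)⟩

theorem Subgroup.eq_zpowers_of_mem_center {G : Type*} [Group G] {P : Subgroup G}
    (hmin : ∀ N : Subgroup G, N.Normal → N ≤ P → N = ⊥ ∨ N = P) {x : G} (hxP : x ∈ P)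
    (hx : x ∈ center G) (hx1 : x ≠ 1) : P = zpowers x :=
  ((hmin _ (normal_of_le_center (zpowers_le.mpr hx)) (zpowers_le.mpr hxP)).resolve_left
    (zpowers_eq_bot.not.mpr hx1)).symm

theorem schmidt_no_middle_subgroups_general (hp : p.Prime) (hq : q.Prime) (hpq : p ≠ q)
    (hPnorm : P.Normal) (hPcard : Nat.card P = p ^ r)
    (hPab : ∀ a b : P, a * b = b * a)
    (hQcard : Nat.card Q = q)
    (hsup : P ⊔ Q = ⊤) (hinf : P ⊓ Q = ⊥)
    (hmin : ∀ N : Subgroup G, N.Normal → N ≤ P → N = ⊥ ∨ N = P)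
    (hschmidt : ∀ H : Subgroup G, H ≠ ⊤ → Group.IsNilpotent H) :
    ∀ i, 1 ≤ i → i ≤ r - 1 → ∀ H : Subgroup G, Nat.card H ≠ p ^ i * q := by
  intro i hi hir H hH
  have : Fact p.Prime := ⟨hp⟩
  have : Fact q.Prime := ⟨hq⟩
  have hPQ := Subgroup.isComplement'_of_isCompl_of_normal
    ⟨disjoint_iff.mpr hinf, codisjoint_iff.mpr hsup⟩
  have hG : Nat.card G = p ^ r * q := by rw [← hPcard, ← hQcard, hPQ.card_mul_card]
  have hHtop : H ≠ ⊤ := by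
    rintro rfl
    rw [Subgroup.card_top, hG, Nat.mul_right_cancel_iff hq.pos] at hH
    have := Nat.pow_right_injective hp.two_le hH
    omega
  have := hschmidt H hHtop
  obtain ⟨x, z, hx, hz, hxz⟩ := exists_commute_orderOf_eq_of_isNilpotent (G := H) hpq
    (hH ▸ dvd_mul_of_dvd_left (dvd_pow_self p (by omega)) q) (hH ▸ dvd_mul_left q _)
  replace hxz : Commute (x : G) z := congrArg Subtype.val hxz
  rw [← Subgroup.orderOf_coe] at hx hz
  have hxP : (x : G) ∈ P := (IsPGroup.of_card hPcard).le_of_normal_of_not_dvd_index hPnorm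
    (by rw [hPQ.symm.index_eq_card, hQcard]; exact mt (Nat.prime_dvd_prime_iff_eq hp hq).mp hpq)
    (isPGroup_zpowers_of_orderOf_eq hx) (Subgroup.mem_zpowers _)
  have hPz : P ⊔ Subgroup.zpowers (z : G) = ⊤ :=
    (Subgroup.isComplement'_of_coprime (by rw [hPcard, Nat.card_zpowers, hz, hG])
      (by rw [hPcard, Nat.card_zpowers, hz]
          exact Nat.Coprime.pow_left r ((Nat.coprime_primes hp hq).mpr hpq))).sup_eq_top
  have hxcenter : (x : G) ∈ Subgroup.center G := Subgroup.mem_center_of_sup_eq_top hPz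
    (fun a ha => congrArg Subtype.val (hPab ⟨a, ha⟩ ⟨x, hxP⟩))
    (fun k hk => by obtain ⟨n, rfl⟩ := Subgroup.mem_zpowers_iff.mp hk; exact hxz.symm.zpow_left n)
  have hx1 : (x : G) ≠ 1 := by rw [Ne, ← orderOf_eq_one_iff, hx]; exact hp.ne_one
  rw [Subgroup.eq_zpowers_of_mem_center hmin hxP hxcenter hx1, Nat.card_zpowers, hx] at hPcard
  have := Nat.pow_right_injective hp.two_le (hPcard.symm.trans (pow_one p).symm)
  omega

/-- A Schmidt group which is a semidirect product of an elementary abelian minimal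
normal `p`-subgroup of order `p ^ r` and a cyclic group of prime order `q` has no
subgroup of order `p ^ i * q` for `1 ≤ i ≤ r - 1`. -/
theorem schmidt_no_middle_subgroups (hp : p.Prime) (hq : q.Prime) (hpq : p ≠ q) (hr : 1 ≤ r)
    (hPnorm : P.Normal) (hPcard : Nat.card P = p ^ r)
    (hPab : ∀ a b : P, a * b = b * a) (hPelem : ∀ a : P, a ^ p = 1)
    (hQcard : Nat.card Q = q)
    (hsup : P ⊔ Q = ⊤) (hinf : P ⊓ Q = ⊥)
    (hmin : ∀ N : Subgroup G, N.Normal → N ≤ P → N = ⊥ ∨ N = P)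
    (hnotnil : ¬ Group.IsNilpotent G)
    (hschmidt : ∀ H : Subgroup G, H ≠ ⊤ → Group.IsNilpotent H) :
    ∀ i, 1 ≤ i → i ≤ r - 1 → ∀ H : Subgroup G, Nat.card H ≠ p ^ i * q :=
  schmidt_no_middle_subgroups_general hp hq hpq hPnorm hPcard hPab hQcard hsup hinf hmin hschmidt
end

section
/- Let $S_1 = P_1 \rtimes Q_1$ be a Schmidt group with $P_1$ elementary abelian of order $p^r$ and $Q_1$ cyclic of prime order $q$, where $P_1$ is a minimal normal subgroup. Then the total number of subgroups of $S_1$ is $a_{r,p} + p^r + 1$, where $a_{r,p}$ is the total number of subgroups of the elementary abelian group of order $p^r$. -/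
open scoped Pointwise

variable {G : Type*} [Group G] [Finite G] {p q r : ℕ} {P Q : Subgroup G}

/-!
`P` has prime index `q`, so a subgroup `H ⊄ P` satisfies `P ⊔ H = G`. Then `H ⊓ P` is normalized by
`H` (as `P` is normal) and by `P` (as `P` is abelian), hence is normal in `G`, and minimality of `P`
leaves `H ⊓ P = ⊥`, where `|H|` divides `[G : P] = q`, or `P ≤ H`, where `H = G`. So the subgroups
of `G` are those of `P`, the subgroups of order `q`, which are the Sylow `q`-subgroups, and `G`.
As `G` is not abelian, `Q` is not normal, so its normalizer is neither contained in `P` nor all of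
`G`; it therefore has order `q` and equals `Q`, giving `[G : Q] = p ^ r` Sylow `q`-subgroups.
-/

section

-- Rebinding `G` keeps the ambient `[Finite G]` out of the lemmas that do not need it.
variable {G : Type*} [Group G] {P Q H K : Subgroup G}

open Subgroup

theorem Group.isNilpotent_of_isMulCommutative (h : IsMulCommutative G) : Group.IsNilpotent G :=
  ⟨⟨1, upperCentralSeries_one_eq_top_iff.mpr h⟩⟩

theorem Subgroup.isMulCommutative_of_sup_eq_top [IsMulCommutative H] [IsMulCommutative K]
    (hHK : H ≤ centralizer (K : Set G)) (hsup : H ⊔ K = ⊤) : IsMulCommutative G := by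
  have hcentralizer :
      centralizer ((H ⊔ K : Subgroup G) : Set G) = centralizer H ⊓ centralizer K := by
    ext x
    simp [sup_eq_closure, centralizer_closure, mem_centralizer_iff, or_imp, forall_and]
  rw [← center_eq_top_iff, eq_top_iff, ← hsup, ← centralizer_univ, ← coe_top, ← hsup,
    hcentralizer]
  exact sup_le (le_inf (le_centralizer H) hHK)
    (le_inf (le_centralizer_iff.mp hHK) (le_centralizer K))

theorem Subgroup.IsComplement'.isMulCommutative_of_normal [IsMulCommutative H]
    [IsMulCommutative K] (h : IsComplement' H K) (hH : H.Normal) (hK : K.Normal) :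
    IsMulCommutative G :=
  isMulCommutative_of_sup_eq_top
    (fun x hx => mem_centralizer_iff.mpr fun y hy =>
      (commute_of_normal_of_disjoint H K hH hK h.disjoint x y hx hy).symm)
    h.sup_eq_top

theorem Subgroup.Normal.isComplement' (hP : P.Normal) (hinf : P ⊓ Q = ⊥) (hsup : P ⊔ Q = ⊤) :
    IsComplement' P Q :=
  isComplement'_of_disjoint_and_mul_eq_univ (disjoint_iff.mpr hinf)
    (by rw [← normal_mul, hsup, coe_top])

theorem Subgroup.sup_eq_top_of_index_prime (hP : P.index.Prime) (hH : ¬ H ≤ P) : P ⊔ H = ⊤ := by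
  have h := relIndex_mul_index (le_sup_left : P ≤ P ⊔ H)
  rw [← h, Nat.prime_mul_iff] at hP
  rcases hP with ⟨-, hidx⟩ | ⟨-, hrel⟩
  · exact index_eq_one.mp hidx
  · exact absurd (le_sup_right.trans (relIndex_eq_one.mp hrel)) hH

theorem Subgroup.normal_inf_of_sup_eq_top [IsMulCommutative P] [P.Normal] (hsup : P ⊔ H = ⊤) :
    (H ⊓ P).Normal := by
  rw [← normalizer_eq_top_iff, eq_top_iff, ← hsup]
  refine sup_le ?_ ?_
  · exact (le_centralizer P).trans
      ((centralizer_le inf_le_right).trans (centralizer_le_normalizer _))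
  · exact (le_inf le_normalizer le_normalizer_of_normal).trans inf_normalizer_le_normalizer_inf

theorem Subgroup.not_le_iff_card_eq_index_or_eq_top [IsMulCommutative P] [P.Normal]
    (hmin : ∀ N : Subgroup G, N.Normal → N ≤ P → N = ⊥ ∨ N = P) (hidx : P.index.Prime)
    (hcop : (Nat.card P).Coprime P.index) (H : Subgroup G) :
    ¬ H ≤ P ↔ Nat.card H = P.index ∨ H = ⊤ := by
  constructor
  · intro hH
    have hsup := sup_eq_top_of_index_prime hidx hH
    rcases hmin _ (normal_inf_of_sup_eq_top hsup) inf_le_right with hbot | hPH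
    · left
      have hdvd : Nat.card H ∣ P.index := by
        rw [← relIndex_bot_left H, ← hbot, inf_relIndex_left]
        exact relIndex_dvd_index_of_normal P H
      refine (hidx.eq_one_or_self_of_dvd _ hdvd).resolve_left fun h1 => hH ?_
      rw [card_eq_one.mp h1]
      exact bot_le
    · right
      rwa [sup_eq_right.mpr (hPH ▸ inf_le_left)] at hsup
  · rintro (hcard | rfl) hle
    · have hcopH := Nat.Coprime.coprime_dvd_left (card_dvd_of_le hle) hcop
      rw [hcard] at hcopH
      exact hidx.one_lt.ne' (hcopH.eq_one_of_dvd dvd_rfl)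
    · exact hidx.one_lt.ne' (index_eq_one.mpr (top_le_iff.mp hle))

theorem Subgroup.normalizer_eq_self_of_card_eq_index [Finite G]
    (hclass : ∀ H : Subgroup G, ¬ H ≤ P ↔ Nat.card H = P.index ∨ H = ⊤)
    (hQ : Nat.card Q = P.index) (hQn : ¬ Q.Normal) : normalizer (Q : Set G) = Q := by
  have hN : ¬ normalizer (Q : Set G) ≤ P := fun h =>
    (hclass Q).mpr (Or.inl hQ) (le_normalizer.trans h)
  rcases (hclass _).mp hN with hcard | htop
  · exact (eq_of_le_of_card_ge le_normalizer (hcard.trans hQ.symm).le).symm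
  · exact absurd (normalizer_eq_top_iff.mp htop) hQn

theorem Sylow.card_eq_card_subgroups_card_eq [Fact p.Prime] [Finite G] (S : Sylow p G) :
    Nat.card (Sylow p G) = Nat.card {H : Subgroup G // Nat.card H = Nat.card S} := by
  have hpgroup {H : Subgroup G} (hH : Nat.card H = Nat.card S) : IsPGroup p H :=
    IsPGroup.iff_card.mpr (hH ▸ IsPGroup.iff_card.mp S.isPGroup')
  have hindex {H : Subgroup G} (hH : Nat.card H = Nat.card S) : H.index = S.index :=
    Nat.eq_of_mul_eq_mul_left Nat.card_pos (by rw [card_mul_index, hH, card_mul_index])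
  exact Nat.card_congr
    { toFun := fun T => ⟨T, Nat.card_congr (T.equiv S).toEquiv⟩
      invFun := fun H => (hpgroup H.2).toSylow (hindex H.2 ▸ S.not_dvd_index)
      left_inv := fun T => rfl
      right_inv := fun H => rfl }

theorem Subgroup.card_subgroup_eq_card_add_card_add_one [Finite G] {n : ℕ}
    (hclass : ∀ H : Subgroup G, ¬ H ≤ P ↔ Nat.card H = n ∨ H = ⊤) (hn : n ≠ Nat.card G) :
    Nat.card (Subgroup G) =
      Nat.card (Subgroup P) + Nat.card {H : Subgroup G // Nat.card H = n} + 1 := by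
  classical
  have hdisj : Disjoint (fun H : Subgroup G => Nat.card H = n) (· = ⊤) := by
    rw [Pi.disjoint_iff]
    rintro H
    rw [Prop.disjoint_iff]
    rintro ⟨hcard, rfl⟩
    exact hn (hcard ▸ card_top)
  have e : {H : Subgroup G // ¬ H ≤ P} ≃
      {H : Subgroup G // Nat.card H = n} ⊕ {H : Subgroup G // H = ⊤} :=
    (Equiv.subtypeEquivRight hclass).trans (subtypeOrEquiv _ _ hdisj)
  rw [← Nat.card_congr (Equiv.sumCompl (· ≤ P)), Nat.card_sum, Nat.card_congr e, Nat.card_sum,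
    ← Nat.card_congr (MapSubtype.orderIso P).toEquiv,
    Nat.card_unique (α := {H : Subgroup G // H = ⊤}), add_assoc]

end

theorem schmidt_card_subgroups_general (hp : p.Prime) (hq : q.Prime) (hpq : p ≠ q) (hr : 1 ≤ r)
    (hPnorm : P.Normal) (hPcard : Nat.card P = p ^ r)
    (hPab : ∀ a b : P, a * b = b * a)
    (hQcard : Nat.card Q = q)
    (hsup : P ⊔ Q = ⊤) (hinf : P ⊓ Q = ⊥)
    (hmin : ∀ N : Subgroup G, N.Normal → N ≤ P → N = ⊥ ∨ N = P)
    (hnotnil : ¬ Group.IsNilpotent G) :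
    Nat.card (Subgroup G) = Nat.card (Subgroup P) + p ^ r + 1 := by
  have hPQ := hPnorm.isComplement' hinf hsup
  have hPidx : P.index = q := hPQ.symm.index_eq_card.trans hQcard
  have hQidx : Q.index = p ^ r := hPQ.index_eq_card.trans hPcard
  have hcop : (p ^ r).Coprime q := ((Nat.coprime_primes hp hq).mpr hpq).pow_left r
  have : Fact q.Prime := ⟨hq⟩
  have : IsMulCommutative P := ⟨⟨hPab⟩⟩
  have : IsCyclic Q := isCyclic_of_prime_card hQcard
  have hclass := Subgroup.not_le_iff_card_eq_index_or_eq_top hmin (hPidx ▸ hq)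
    (by rwa [hPcard, hPidx])
  have hQn : ¬ Q.Normal := fun hQ =>
    hnotnil (Group.isNilpotent_of_isMulCommutative (hPQ.isMulCommutative_of_normal hPnorm hQ))
  let S : Sylow q G := (IsPGroup.of_card (hQcard.trans (pow_one q).symm)).toSylow
    (by rw [hQidx]; exact (hq.coprime_iff_not_dvd.mp hcop.symm))
  have hSQ : (S : Subgroup G) = Q := rfl
  have hcount : Nat.card {H : Subgroup G // Nat.card H = q} = p ^ r := by
    rw [← hQcard, ← hSQ, ← S.card_eq_card_subgroups_card_eq, S.card_eq_index_normalizer,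
      ← Sylow.coe_coe, hSQ,
      Subgroup.normalizer_eq_self_of_card_eq_index hclass (hQcard.trans hPidx.symm) hQn, hQidx]
  have hn : P.index ≠ Nat.card G := by
    rw [← P.card_mul_index, hPcard, hPidx]
    exact fun h => (Nat.one_lt_pow (by omega) hp.one_lt).ne'
      (Nat.eq_of_mul_eq_mul_right hq.pos (h.symm.trans (one_mul q).symm))
  rw [Subgroup.card_subgroup_eq_card_add_card_add_one hclass hn, hPidx, hcount]

/-- The number of subgroups of such a Schmidt group is `a + p ^ r + 1` where `a` is
the number of subgroups of its Sylow `p`-subgroup. -/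
theorem schmidt_card_subgroups (hp : p.Prime) (hq : q.Prime) (hpq : p ≠ q) (hr : 1 ≤ r)
    (hPnorm : P.Normal) (hPcard : Nat.card P = p ^ r)
    (hPab : ∀ a b : P, a * b = b * a) (hPelem : ∀ a : P, a ^ p = 1)
    (hQcard : Nat.card Q = q)
    (hsup : P ⊔ Q = ⊤) (hinf : P ⊓ Q = ⊥)
    (hmin : ∀ N : Subgroup G, N.Normal → N ≤ P → N = ⊥ ∨ N = P)
    (hnotnil : ¬ Group.IsNilpotent G)
    (hschmidt : ∀ H : Subgroup G, H ≠ ⊤ → Group.IsNilpotent H) :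
    Nat.card (Subgroup G) = Nat.card (Subgroup P) + p ^ r + 1 :=
  schmidt_card_subgroups_general hp hq hpq hr hPnorm hPcard hPab hQcard hsup hinf hmin hnotnil
end

section
/- Let $S_1 = P_1 \rtimes Q_1$ be a Schmidt group with $P_1$ elementary abelian of order $p^r$ (a minimal normal subgroup) and $Q_1$ cyclic of prime order $q$, and let $a = a_{r,p}$ be the number of subgroups of $P_1$. Then the subgroup commutativity degree of $S_1$ equals $\frac{a^2 + 2a + 7p^r + 1}{(a + p^r + 1)^2}$. -/
/-!
Every subgroup `H` lies in `P`, has order `q`, or is `G`. Indeed `P` has prime index, so either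
`H ≤ P` or `P ⊔ H = G`; in the latter case `P ⊓ H` is normalised by `H` and centralised by the
abelian `P`, so by minimality it is `1` (then `H ≅ G/P`) or `P` (then `H = G`).

A normal subgroup of order `q` would centralise `P` and make `G` abelian, so the Sylow
`q`-subgroups are self-normalising: there are `[G : Q] = p^r` of them, and Sylow's theorem gives
`q < p^r`. Permuting subgroups `H`, `K` have `HK = H ⊔ K`, of order at most `|H||K|`; against the
trichotomy this shows that a Sylow `q`-subgroup permutes with no other one, and with a subgroup of
`P` only if the latter is `1` or `P`. Everything else permutes (`P` is abelian, `1`, `P` and `G`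
are normal), and counting over the `a` subgroups of `P`, the `p^r` Sylow `q`-subgroups and `G`
gives `a² + 2a + 7p^r + 1` permuting pairs among `a + p^r + 1` subgroups.
-/

open scoped Pointwise

variable {G : Type*} [Group G] [Finite G] {p q r : ℕ} {P Q : Subgroup G}

namespace Subgroup

variable {G : Type*} [Group G]

theorem coe_sup_of_mul_comm {H K : Subgroup G}
    (h : (H : Set G) * K = K * H) : ((H ⊔ K : Subgroup G) : Set G) = H * K := by
  have hmul : ((H : Set G) * K) * (H * K) = H * K := by
    rw [mul_assoc, ← mul_assoc (K : Set G), ← h, mul_assoc, coe_mul_coe, ← mul_assoc,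
      coe_mul_coe]
  have hinv : ((H : Set G) * K)⁻¹ = H * K := by
    rw [mul_inv_rev, inv_coe_set, inv_coe_set, h]
  let HK : Subgroup G :=
    { carrier := H * K
      mul_mem' := fun hx hy => hmul ▸ Set.mul_mem_mul hx hy
      one_mem' := ⟨1, H.one_mem, 1, K.one_mem, one_mul 1⟩
      inv_mem' := fun hx => hinv ▸ Set.inv_mem_inv.mpr hx }
  refine le_antisymm (sup_le (c := HK) ?_ ?_) ?_
  · exact fun x hx => ⟨x, hx, 1, K.one_mem, mul_one x⟩
  · exact fun y hy => ⟨1, H.one_mem, y, hy, one_mul y⟩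
  · rintro _ ⟨x, hx, y, hy, rfl⟩
    exact mul_mem (mem_sup_left hx) (mem_sup_right hy)

theorem natCard_sup_le_of_mul_comm {H K : Subgroup G} (h : (H : Set G) * K = K * H) :
    Nat.card (H ⊔ K : Subgroup G) ≤ Nat.card H * Nat.card K := by
  have := Set.natCard_mul_le (s := (H : Set G)) (t := K)
  rwa [← coe_sup_of_mul_comm h] at this

theorem mul_comm_of_le_centralizer {H K : Subgroup G}
    (h : H ≤ centralizer K) : (H : Set G) * K = K * H := by
  ext z
  constructor
  · rintro ⟨x, hx, y, hy, rfl⟩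
    exact ⟨y, hy, x, hx, h hx y hy⟩
  · rintro ⟨y, hy, x, hx, rfl⟩
    exact ⟨x, hx, y, hy, (h hx y hy).symm⟩

theorem mul_comm_of_normal_left {H : Subgroup G} (K : Subgroup G)
    [H.Normal] : (H : Set G) * K = K * H :=
  (set_mul_normal_comm _ H).symm

theorem eq_or_eq_top_of_le_of_index_prime {P K : Subgroup G}
    (hP : P.index.Prime) (hle : P ≤ K) : K = P ∨ K = ⊤ := by
  rw [← relIndex_mul_index hle, Nat.prime_mul_iff, index_eq_one, relIndex_eq_one] at hP
  rcases hP with ⟨-, rfl⟩ | ⟨-, hKP⟩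
  · exact Or.inr rfl
  · exact Or.inl (le_antisymm hKP hle)

theorem normal_of_le_of_sup_eq_top {P K H : Subgroup G}
    (hP : P ≤ centralizer P) (hK : K ≤ P) (hH : H ≤ normalizer (K : Set G))
    (hsup : P ⊔ H = ⊤) : K.Normal := by
  rw [← normalizer_eq_top_iff, eq_top_iff, ← hsup]
  refine sup_le (le_trans ?_ (centralizer_le_normalizer _)) hH
  exact hP.trans (centralizer_le hK)

theorem card_eq_index_of_disjoint_of_sup_eq_top {P H : Subgroup G}
    [P.Normal] (hdisj : Disjoint P H) (hsup : P ⊔ H = ⊤) : Nat.card H = P.index := by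
  refine (isComplement'_of_disjoint_and_mul_eq_univ hdisj.symm ?_).index_eq_card.symm
  rw [← mul_normal, sup_comm, hsup, coe_top]

theorem isNilpotent_of_le_centralizer {H K : Subgroup G}
    (hH : H ≤ centralizer H) (hK : K ≤ centralizer K) (hHK : H ≤ centralizer K)
    (hsup : H ⊔ K = ⊤) : Group.IsNilpotent G := by
  have hHc : H ≤ center G := by
    rw [← centralizer_univ, ← coe_top, ← hsup, le_centralizer_iff]
    exact sup_le hH (le_centralizer_iff.mp hHK)
  have hKc : K ≤ center G := by
    rw [← centralizer_univ, ← coe_top, ← hsup, le_centralizer_iff]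
    exact sup_le hHK hK
  refine isNilpotent_of_ker_le_center (1 : G →* Unit) ?_
  rw [MonoidHom.ker_one, ← hsup]
  exact sup_le hHc hKc

theorem le_or_card_eq_index_or_eq_top {P : Subgroup G} [P.Normal]
    (hP : P ≤ centralizer P) (hmin : ∀ N : Subgroup G, N.Normal → N ≤ P → N = ⊥ ∨ N = P)
    (hidx : P.index.Prime) (H : Subgroup G) : H ≤ P ∨ Nat.card H = P.index ∨ H = ⊤ := by
  rcases eq_or_eq_top_of_le_of_index_prime hidx (le_sup_left : P ≤ P ⊔ H) with hPH | hPH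
  · exact Or.inl (sup_eq_left.mp hPH)
  have hnormal : (P ⊓ H).Normal :=
    normal_of_le_of_sup_eq_top hP inf_le_left
      (le_trans (le_inf le_normalizer_of_normal le_normalizer) inf_normalizer_le_normalizer_inf)
      hPH
  rcases hmin (P ⊓ H) hnormal inf_le_left with hbot | hinf
  · exact Or.inr (Or.inl (card_eq_index_of_disjoint_of_sup_eq_top (disjoint_iff.mpr hbot) hPH))
  · exact Or.inr (Or.inr (by rwa [sup_eq_right.mpr (inf_eq_left.mp hinf)] at hPH))

theorem natCard_subtype_le (P : Subgroup G) :
    Nat.card {H : Subgroup G // H ≤ P} = Nat.card (Subgroup P) :=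
  Nat.card_congr (MapSubtype.orderIso P).toEquiv.symm

end Subgroup

open Subgroup Finset

theorem univ_eq_of_partition {α : Type*} [Fintype α] [DecidableEq α] {A S : Finset α} {t : α}
    (hpart : ∀ x, x ∈ A ∨ x ∈ S ∨ x = t) : univ = A ∪ S ∪ {t} := by
  ext x
  simp only [mem_univ, mem_union, mem_singleton, true_iff, or_assoc]
  exact hpart x

theorem natCard_eq_of_partition {α : Type*} [Fintype α] {A S : Finset α} {t : α}
    (hpart : ∀ x, x ∈ A ∨ x ∈ S ∨ x = t) (hAS : Disjoint A S) (htA : t ∉ A) (htS : t ∉ S) :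
    Nat.card α = #A + #S + 1 := by
  classical
  rw [Nat.card_eq_fintype_card, ← card_univ, univ_eq_of_partition hpart,
    card_union_of_disjoint (by simp [htA, htS]), card_union_of_disjoint hAS, card_singleton]

theorem natCard_rel_eq_of_partition {α : Type*} [Fintype α] {R : α → α → Prop}
    (hR : ∀ x y, R x y → R y x) {A S B : Finset α} {t : α}
    (hpart : ∀ x, x ∈ A ∨ x ∈ S ∨ x = t) (hAS : Disjoint A S) (htA : t ∉ A) (htS : t ∉ S)
    (hBA : B ⊆ A) (hRA : ∀ x ∈ A, ∀ y ∈ A, R x y)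
    (hRAS : ∀ x ∈ A, ∀ y ∈ S, (R x y ↔ x ∈ B)) (hRS : ∀ x ∈ S, ∀ y ∈ S, (R x y ↔ x = y))
    (hRt : ∀ x, R t x) :
    Nat.card {pr : α × α // R pr.1 pr.2} = #A ^ 2 + 2 * #A + (2 * #B + 3) * #S + 1 := by
  classical
  have huniv : (univ : Finset α) = A ∪ S ∪ {t} := univ_eq_of_partition hpart
  have hASt : Disjoint (A ∪ S) {t} := by simp [htA, htS]
  have hrow (x : α) :
      #(univ.filter (R x)) = #(A.filter (R x)) + #(S.filter (R x)) + 1 := by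
    rw [huniv, filter_union, card_union_of_disjoint (disjoint_filter_filter hASt), filter_union,
      card_union_of_disjoint (disjoint_filter_filter hAS), filter_singleton,
      if_pos (hR _ _ (hRt x)), card_singleton]
  have hA (x : α) (hx : x ∈ A) :
      #(univ.filter (R x)) = #A + (if x ∈ B then #S else 0) + 1 := by
    rw [hrow, filter_true_of_mem (hRA x hx)]
    split_ifs with hxB
    · rw [filter_true_of_mem fun y hy => (hRAS x hx y hy).mpr hxB]
    · rw [filter_false_of_mem fun y hy => mt (hRAS x hx y hy).mp hxB, card_empty]
  have hS (x : α) (hx : x ∈ S) : #(univ.filter (R x)) = #B + 1 + 1 := by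
    have hAx : A.filter (R x) = B := by
      ext y
      rw [mem_filter]
      exact ⟨fun ⟨hy, hxy⟩ => (hRAS y hy x hx).mp (hR _ _ hxy),
        fun hy => ⟨hBA hy, hR _ _ ((hRAS y (hBA hy) x hx).mpr hy)⟩⟩
    have hSx : S.filter (R x) = {x} := by
      ext y
      rw [mem_filter, mem_singleton]
      exact ⟨fun ⟨hy, hxy⟩ => ((hRS x hx y hy).mp hxy).symm,
        fun hy => ⟨hy ▸ hx, (hRS x hx y (hy ▸ hx)).mpr hy.symm⟩⟩
    rw [hrow, hAx, hSx, card_singleton]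
  have ht : #(univ.filter (R t)) = #A + #S + 1 := by
    rw [filter_true_of_mem fun x _ => hRt x, card_univ, ← Nat.card_eq_fintype_card,
      natCard_eq_of_partition hpart hAS htA htS]
  calc Nat.card {pr : α × α // R pr.1 pr.2}
      = ∑ x, #(univ.filter (R x)) := by
        rw [Nat.card_eq_fintype_card, Fintype.card_subtype, card_filter, Fintype.sum_prod_type]
        simp only [card_filter]
    _ = ∑ x ∈ A, (#A + (if x ∈ B then #S else 0) + 1) + ∑ x ∈ S, (#B + 1 + 1)
          + (#A + #S + 1) := by
        rw [sum_congr huniv fun _ _ => rfl, sum_union hASt, sum_union hAS, sum_singleton,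
          sum_congr rfl hA, sum_congr rfl hS, ht]
    _ = #A ^ 2 + 2 * #A + (2 * #B + 3) * #S + 1 := by
        rw [sum_add_distrib, sum_add_distrib, sum_ite_mem, inter_eq_right.mpr hBA]
        simp only [sum_const, smul_eq_mul]
        ring

section

variable {G : Type*} [Group G] {P Q : Subgroup G}

structure IsSchmidtSplitting (P Q : Subgroup G) : Prop where
  normal : P.Normal
  le_centralizer : P ≤ centralizer P
  minimal : ∀ N : Subgroup G, N.Normal → N ≤ P → N = ⊥ ∨ N = P
  disjoint : Disjoint P Q
  sup_eq_top : P ⊔ Q = ⊤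
  prime_card : (Nat.card Q).Prime
  coprime_card : (Nat.card P).Coprime (Nat.card Q)
  not_isNilpotent : ¬ Group.IsNilpotent G

namespace IsSchmidtSplitting

theorem index_eq (h : IsSchmidtSplitting P Q) : P.index = Nat.card Q :=
  have := h.normal
  (card_eq_index_of_disjoint_of_sup_eq_top h.disjoint h.sup_eq_top).symm

theorem disjoint_of_card_eq (h : IsSchmidtSplitting P Q) {X : Subgroup G}
    (hX : Nat.card X = Nat.card Q) : Disjoint P X :=
  disjoint_of_coprime_natCard (hX ▸ h.coprime_card)

theorem card_eq (h : IsSchmidtSplitting P Q) : Nat.card G = Nat.card P * Nat.card Q := by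
  rw [← h.index_eq, card_mul_index]

theorem le_or_card_eq_or_eq_top (h : IsSchmidtSplitting P Q) (H : Subgroup G) :
    H ≤ P ∨ Nat.card H = Nat.card Q ∨ H = ⊤ := by
  have := h.normal
  rw [← h.index_eq]
  exact le_or_card_eq_index_or_eq_top h.le_centralizer h.minimal (h.index_eq ▸ h.prime_card) H

theorem not_le_of_card_eq (h : IsSchmidtSplitting P Q) {X : Subgroup G}
    (hX : Nat.card X = Nat.card Q) : ¬ X ≤ P := fun hXP => by
  rw [(h.disjoint_of_card_eq hX).symm.eq_bot_of_le hXP, card_bot] at hX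
  exact h.prime_card.one_lt.ne hX

theorem index_eq_of_card_eq (h : IsSchmidtSplitting P Q) {X : Subgroup G}
    (hX : Nat.card X = Nat.card Q) : X.index = Nat.card P := by
  have := card_mul_index X
  rw [h.card_eq, hX, mul_comm] at this
  exact Nat.eq_of_mul_eq_mul_right h.prime_card.pos this

theorem exists_sylow_of_card_eq (h : IsSchmidtSplitting P Q) {X : Subgroup G}
    (hX : Nat.card X = Nat.card Q) : ∃ s : Sylow (Nat.card Q) G, (s : Subgroup G) = X := by
  have : Fact (Nat.card Q).Prime := ⟨h.prime_card⟩
  refine ⟨IsPGroup.toSylow (IsPGroup.of_card (n := 1) (by rw [hX, pow_one])) ?_, rfl⟩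
  rw [h.index_eq_of_card_eq hX]
  exact fun hdvd => h.prime_card.one_lt.ne' (Nat.Coprime.eq_one_of_dvd h.coprime_card.symm hdvd)

theorem not_top_le (h : IsSchmidtSplitting P Q) : ¬ ⊤ ≤ P := fun hP =>
  h.not_le_of_card_eq rfl (le_top.trans hP)

theorem not_le_centralizer (h : IsSchmidtSplitting P Q) : ¬ P ≤ centralizer Q := fun hPQ => by
  have : Fact (Nat.card Q).Prime := ⟨h.prime_card⟩
  have := isCyclic_of_prime_card (α := Q) rfl
  exact h.not_isNilpotent (isNilpotent_of_le_centralizer h.le_centralizer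
    (le_centralizer_iff_isMulCommutative.mpr inferInstance) hPQ h.sup_eq_top)

theorem ne_bot (h : IsSchmidtSplitting P Q) : P ≠ ⊥ := fun hP =>
  h.not_le_centralizer (hP ▸ bot_le)

end IsSchmidtSplitting

end

namespace IsSchmidtSplitting

theorem normalizer_eq (h : IsSchmidtSplitting P Q) : normalizer (Q : Set G) = Q := by
  rcases h.le_or_card_eq_or_eq_top (normalizer (Q : Set G)) with hle | hcard | htop
  · exact absurd (le_normalizer.trans hle) (h.not_le_of_card_eq rfl)
  · exact (eq_of_le_of_card_ge le_normalizer hcard.le).symm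
  · have hQ : Q.Normal := normalizer_eq_top_iff.mp htop
    exact absurd (fun x hx y hy => (commute_of_normal_of_disjoint P Q h.normal hQ h.disjoint
      x y hx hy).symm.eq) h.not_le_centralizer

theorem card_coe_sylow (h : IsSchmidtSplitting P Q) (s : Sylow (Nat.card Q) G) :
    Nat.card s = Nat.card Q := by
  have : Fact (Nat.card Q).Prime := ⟨h.prime_card⟩
  obtain ⟨sQ, hsQ⟩ := h.exists_sylow_of_card_eq rfl
  rw [Sylow.card_eq_multiplicity, ← Sylow.card_eq_multiplicity sQ, hsQ]

theorem card_sylow (h : IsSchmidtSplitting P Q) :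
    Nat.card (Sylow (Nat.card Q) G) = Nat.card P := by
  have : Fact (Nat.card Q).Prime := ⟨h.prime_card⟩
  obtain ⟨sQ, hsQ⟩ := h.exists_sylow_of_card_eq rfl
  rw [Sylow.card_eq_index_normalizer sQ, ← Sylow.coe_coe, hsQ, h.normalizer_eq,
    h.index_eq_of_card_eq rfl]

theorem natCard_subtype_card_eq (h : IsSchmidtSplitting P Q) :
    Nat.card {X : Subgroup G // Nat.card X = Nat.card Q} = Nat.card P := by
  rw [← h.card_sylow]
  refine (Nat.card_eq_of_bijective (fun s => ⟨s, h.card_coe_sylow s⟩) ⟨?_, ?_⟩).symm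
  · exact fun s t hst => Sylow.ext (congrArg Subtype.val hst)
  · rintro ⟨X, hX⟩
    obtain ⟨s, rfl⟩ := h.exists_sylow_of_card_eq hX
    exact ⟨s, rfl⟩

theorem card_lt (h : IsSchmidtSplitting P Q) : Nat.card Q < Nat.card P := by
  have : Fact (Nat.card Q).Prime := ⟨h.prime_card⟩
  have hmod := card_sylow_modEq_one (Nat.card Q) G
  have hP : 1 < Nat.card P := P.one_lt_card_iff_ne_bot.mpr h.ne_bot
  rw [h.card_sylow] at hmod
  have := Nat.le_of_dvd (by omega) ((Nat.modEq_iff_dvd' hP.le).mp hmod.symm)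
  omega

theorem mul_comm_iff_of_card_eq (h : IsSchmidtSplitting P Q) {X Y : Subgroup G}
    (hX : Nat.card X = Nat.card Q) (hY : Nat.card Y = Nat.card Q) :
    (X : Set G) * Y = Y * X ↔ X = Y := by
  refine ⟨fun hXY => ?_, fun hXY => hXY ▸ rfl⟩
  rcases h.le_or_card_eq_or_eq_top (X ⊔ Y) with hle | hcard | htop
  · exact absurd (le_sup_left.trans hle) (h.not_le_of_card_eq hX)
  · exact (eq_of_le_of_card_ge le_sup_left (hcard.trans hX.symm).le).trans
      (eq_of_le_of_card_ge le_sup_right (hcard.trans hY.symm).le).symm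
  · have hle := natCard_sup_le_of_mul_comm hXY
    rw [htop, card_top, h.card_eq, hX, hY] at hle
    have := h.card_lt
    have := h.prime_card.pos
    nlinarith

theorem mul_comm_iff_of_le (h : IsSchmidtSplitting P Q) {L Y : Subgroup G} (hL : L ≤ P)
    (hY : Nat.card Y = Nat.card Q) : (L : Set G) * Y = Y * L ↔ L = ⊥ ∨ L = P := by
  refine ⟨fun hLY => ?_, ?_⟩
  · rcases h.le_or_card_eq_or_eq_top (L ⊔ Y) with hle | hcard | htop
    · exact absurd (le_sup_right.trans hle) (h.not_le_of_card_eq hY)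
    · have hYeq := eq_of_le_of_card_ge le_sup_right (hcard.trans hY.symm).le
      left
      exact ((h.disjoint_of_card_eq hY).mono_left hL).eq_bot_of_le (hYeq ▸ le_sup_left)
    · have hle := natCard_sup_le_of_mul_comm hLY
      rw [htop, card_top, h.card_eq, hY] at hle
      exact Or.inr (eq_of_le_of_card_ge hL (Nat.le_of_mul_le_mul_right hle h.prime_card.pos))
  · rintro (rfl | rfl)
    · exact mul_comm_of_normal_left Y
    · have := h.normal
      exact mul_comm_of_normal_left Y

theorem card_top_ne (h : IsSchmidtSplitting P Q) : Nat.card (⊤ : Subgroup G) ≠ Nat.card Q := by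
  rw [card_top, h.card_eq]
  have := h.card_lt
  have := h.prime_card.pos
  nlinarith

theorem natCard_subgroup (h : IsSchmidtSplitting P Q) :
    Nat.card (Subgroup G) = Nat.card (Subgroup P) + Nat.card P + 1 := by
  classical
  have := Fintype.ofFinite (Subgroup G)
  rw [natCard_eq_of_partition (A := univ.filter (· ≤ P))
    (S := univ.filter (Nat.card · = Nat.card Q)) (t := ⊤)]
  · simp only [← Fintype.card_subtype, ← Nat.card_eq_fintype_card, natCard_subtype_le,
      h.natCard_subtype_card_eq]
  · simpa only [mem_filter, mem_univ, true_and] using h.le_or_card_eq_or_eq_top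
  · exact disjoint_filter.mpr fun X _ hXP hX => h.not_le_of_card_eq hX hXP
  · simpa only [mem_filter, mem_univ, true_and] using h.not_top_le
  · simpa only [mem_filter, mem_univ, true_and] using h.card_top_ne

theorem natCard_mul_comm (h : IsSchmidtSplitting P Q) :
    Nat.card {HK : Subgroup G × Subgroup G // (HK.1 : Set G) * HK.2 = HK.2 * HK.1} =
      Nat.card (Subgroup P) ^ 2 + 2 * Nat.card (Subgroup P) + 7 * Nat.card P + 1 := by
  classical
  have := Fintype.ofFinite (Subgroup G)
  rw [natCard_rel_eq_of_partition (R := fun H K : Subgroup G => (H : Set G) * K = K * H)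
    (A := univ.filter (· ≤ P)) (S := univ.filter (Nat.card · = Nat.card Q)) (t := ⊤)
    (B := {⊥, P}) (fun _ _ => Eq.symm)]
  · simp only [← Fintype.card_subtype, ← Nat.card_eq_fintype_card, natCard_subtype_le,
      h.natCard_subtype_card_eq, card_pair h.ne_bot.symm]
  · simpa only [mem_filter, mem_univ, true_and] using h.le_or_card_eq_or_eq_top
  · exact disjoint_filter.mpr fun X _ hXP hX => h.not_le_of_card_eq hX hXP
  · simpa only [mem_filter, mem_univ, true_and] using h.not_top_le
  · simpa only [mem_filter, mem_univ, true_and] using h.card_top_ne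
  · simp [insert_subset_iff]
  · simp only [mem_filter, mem_univ, true_and]
    exact fun X hX Y hY =>
      mul_comm_of_le_centralizer (hX.trans (h.le_centralizer.trans (centralizer_le hY)))
  · simp only [mem_filter, mem_univ, true_and, mem_insert, mem_singleton]
    exact fun X hX Y hY => h.mul_comm_iff_of_le hX hY
  · simp only [mem_filter, mem_univ, true_and]
    exact fun X hX Y hY => h.mul_comm_iff_of_card_eq hX hY
  · exact fun X => mul_comm_of_normal_left X

end IsSchmidtSplitting

theorem schmidt_sd_general (hp : p.Prime) (hq : q.Prime) (hpq : p ≠ q)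
    (hPnorm : P.Normal) (hPcard : Nat.card P = p ^ r)
    (hPab : ∀ a b : P, a * b = b * a)
    (hQcard : Nat.card Q = q)
    (hsup : P ⊔ Q = ⊤) (hinf : P ⊓ Q = ⊥)
    (hmin : ∀ N : Subgroup G, N.Normal → N ≤ P → N = ⊥ ∨ N = P)
    (hnotnil : ¬ Group.IsNilpotent G) :
    sd G = ((Nat.card (Subgroup P) : ℚ) ^ 2 + 2 * (Nat.card (Subgroup P) : ℚ)
        + 7 * (p : ℚ) ^ r + 1) / ((Nat.card (Subgroup P) : ℚ) + (p : ℚ) ^ r + 1) ^ 2 := by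
  have h : IsSchmidtSplitting P Q :=
    { normal := hPnorm
      le_centralizer := le_centralizer_iff_isMulCommutative.mpr ⟨⟨hPab⟩⟩
      minimal := hmin
      disjoint := disjoint_iff.mpr hinf
      sup_eq_top := hsup
      prime_card := hQcard ▸ hq
      coprime_card := hPcard ▸ hQcard ▸ (Nat.coprime_primes hp hq |>.mpr hpq).pow_left r
      not_isNilpotent := hnotnil }
  rw [sd, h.natCard_mul_comm, h.natCard_subgroup, hPcard]
  push_cast
  ring

/-- The subgroup commutativity degree of such a Schmidt group is
`(a² + 2a + 7pʳ + 1) / (a + pʳ + 1)²` with `a` the number of subgroups of the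
Sylow `p`-subgroup. -/
theorem schmidt_sd (hp : p.Prime) (hq : q.Prime) (hpq : p ≠ q) (hr : 1 ≤ r)
    (hPnorm : P.Normal) (hPcard : Nat.card P = p ^ r)
    (hPab : ∀ a b : P, a * b = b * a) (hPelem : ∀ a : P, a ^ p = 1)
    (hQcard : Nat.card Q = q)
    (hsup : P ⊔ Q = ⊤) (hinf : P ⊓ Q = ⊥)
    (hmin : ∀ N : Subgroup G, N.Normal → N ≤ P → N = ⊥ ∨ N = P)
    (hnotnil : ¬ Group.IsNilpotent G)
    (hschmidt : ∀ H : Subgroup G, H ≠ ⊤ → Group.IsNilpotent H) :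
    sd G = ((Nat.card (Subgroup P) : ℚ) ^ 2 + 2 * (Nat.card (Subgroup P) : ℚ)
        + 7 * (p : ℚ) ^ r + 1) / ((Nat.card (Subgroup P) : ℚ) + (p : ℚ) ^ r + 1) ^ 2 :=
  schmidt_sd_general hp hq hpq hPnorm hPcard hPab hQcard hsup hinf hmin hnotnil
end

section
/- For every prime power $q$ that is odd and $q > 3$, the projective special linear group $\mathrm{PSL}(2,q)$ contains a subgroup isomorphic to the dihedral group $D_{q+1}$ of order $q+1$. -/
/-!
Let `d` be a nonsquare in `F = 𝔽_q` and `K = F(√d)`, so `|K| = q²`. Left multiplication on `K`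
in the basis `1, √d` embeds `K` into `M₂(F)`, sending `x + y√d` to `!![x, d * y; y, x]`. If `g₀`
generates the cyclic group `Kˣ`, then `g = g₀ ^ (q - 1)` has order `q + 1` and determinant
`det(g₀) ^ (q - 1) = 1`, so it lies in `SL₂(F)`; as `g ^ ((q + 1) / 2) = -1`, its image in
`PSL₂(F)` has order `(q + 1) / 2`. A matrix `S` of determinant `1` anticommuting with `√d` induces
the Frobenius `α ↦ α ^ q` on `K` by conjugation, hence inverts `g`, and `S ^ 2 = -1`. The images of
`g` and `S` generate a dihedral group of order `q + 1`.
-/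

open scoped MatrixGroups

open Polynomial

namespace DihedralGroup

variable {G : Type*} [Group G] {n : ℕ}

def liftRot (a : G) (ha : a ^ n = 1) : ZMod n → G := fun i =>
  (ZMod.lift n ⟨zmultiplesHom (Additive G) (Additive.ofMul a), by simpa⟩ i).toMul

section

variable {a : G} {ha : a ^ n = 1}

lemma liftRot_intCast (k : ℤ) : liftRot a ha k = a ^ k := by
  simp [liftRot]

lemma liftRot_add (i j : ZMod n) :
    liftRot a ha (i + j) = liftRot a ha i * liftRot a ha j := by
  simp [liftRot]

lemma liftRot_mul_of_conj {b : G} (hb : b ^ 2 = 1) (hab : b * a * b⁻¹ = a⁻¹)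
    (i : ZMod n) : liftRot a ha i * b = b * liftRot a ha (-i) := by
  obtain ⟨k, rfl⟩ := ZMod.intCast_surjective i
  have hb' : b⁻¹ = b := inv_eq_of_mul_eq_one_right (by rw [← sq, hb])
  rw [← Int.cast_neg, liftRot_intCast, liftRot_intCast, zpow_neg, ← inv_zpow,
    ← hab, conj_zpow, ← mul_assoc, ← mul_assoc, ← sq, hb, one_mul, hb']

end

variable (a b : G) (ha : a ^ n = 1) (hb : b ^ 2 = 1) (hab : b * a * b⁻¹ = a⁻¹)

def lift : DihedralGroup n →* G where
  toFun
    | r i => liftRot a ha i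
    | sr i => b * liftRot a ha i
  map_one' := by
    change liftRot a ha 0 = 1
    simpa using liftRot_intCast (ha := ha) 0
  map_mul' := by
    have hb' : b * b = 1 := by rw [← sq, hb]
    rintro (i | i) (j | j) <;> simp only [r_mul_r, r_mul_sr, sr_mul_r, sr_mul_sr]
    · exact liftRot_add i j
    · rw [← mul_assoc, liftRot_mul_of_conj hb hab, mul_assoc, ← liftRot_add,
        sub_eq_neg_add]
    · rw [mul_assoc, liftRot_add]
    · rw [mul_assoc, ← mul_assoc _ b, liftRot_mul_of_conj hb hab, ← mul_assoc,
        ← mul_assoc, hb', one_mul, ← liftRot_add, sub_eq_neg_add]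

lemma lift_injective (hn : orderOf a = n) (hn2 : 2 < n) :
    Function.Injective (lift a b ha hb hab) := by
  rw [injective_iff_map_eq_one]
  rintro (i | i) h <;> obtain ⟨k, rfl⟩ := ZMod.intCast_surjective i
  · change liftRot a ha k = 1 at h
    rw [liftRot_intCast, ← orderOf_dvd_iff_zpow_eq_one, hn] at h
    rw [one_def, (ZMod.intCast_zmod_eq_zero_iff_dvd k n).2 h]
  · change b * liftRot a ha k = 1 at h
    rw [liftRot_intCast, mul_eq_one_iff_eq_inv] at h
    -- `b` is a power of `a`, so it commutes with `a`, forcing `a = a⁻¹`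
    have hcomm : b * a * b⁻¹ = a := by
      rw [h]
      exact ((Commute.refl a).zpow_left k).inv_left.mul_inv_cancel
    have : a ^ 2 = 1 := by
      rw [sq]; nth_rw 1 [← hcomm]; rw [hab, inv_mul_cancel]
    have := orderOf_le_of_pow_eq_one two_pos this
    omega

end DihedralGroup

theorem exists_subgroup_mulEquiv_dihedralGroup {G : Type*} [Group G] {n : ℕ} {a b : G}
    (hn : orderOf a = n) (hn2 : 2 < n) (hb : b ^ 2 = 1) (hab : b * a * b⁻¹ = a⁻¹) :
    ∃ H : Subgroup G, Nonempty (H ≃* DihedralGroup n) :=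
  have ha : a ^ n = 1 := hn ▸ pow_orderOf_eq_one a
  ⟨(DihedralGroup.lift a b ha hb hab).range,
    ⟨(MonoidHom.ofInjective (DihedralGroup.lift_injective a b ha hb hab hn hn2)).symm⟩⟩

open Matrix

section QuadraticExtension

variable {F : Type*} [Field F]

lemma exists_sq_sub_mul_sq_eq [Fintype F] (hF : ringChar F ≠ 2) {d : F} (hd : d ≠ 0) (c : F) :
    ∃ s u : F, s ^ 2 - d * u ^ 2 = c := by
  obtain ⟨s, u, h⟩ := FiniteField.exists_root_sum_quadratic (f := X ^ 2 - C c)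
    (g := -C d * X ^ 2) (by compute_degree!) (by compute_degree!)
    (FiniteField.odd_card_of_char_ne_two hF)
  refine ⟨s, u, ?_⟩
  simp only [eval_sub, eval_mul, eval_neg, eval_pow, eval_X, eval_C] at h
  linear_combination h

lemma pow_card_eq_neg_of_sq_eq_of_not_isSquare [Fintype F] {K : Type*} [CommRing K]
    [Algebra F K] (hF : ringChar F ≠ 2) {d : F} (hd : ¬IsSquare d) {θ : K}
    (hθ : θ ^ 2 = algebraMap F K d) : θ ^ Fintype.card F = -θ := by
  have hd0 : d ≠ 0 := by rintro rfl; exact hd ⟨0, by ring⟩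
  have heuler : d ^ (Fintype.card F / 2) = -1 :=
    (FiniteField.pow_dichotomy hF hd0).resolve_left (mt (FiniteField.isSquare_iff hF hd0).2 hd)
  have hq : Fintype.card F = 2 * (Fintype.card F / 2) + 1 := by
    have := FiniteField.odd_card_of_char_ne_two hF
    omega
  rw [hq, pow_succ, pow_mul, hθ, ← map_pow, heuler, map_neg, map_one, neg_one_mul]

lemma irreducible_X_sq_sub_C {d : F} (hd : ¬IsSquare d) : Irreducible (X ^ 2 - C d) :=
  X_pow_sub_C_irreducible_of_prime Nat.prime_two fun b hb => hd ⟨b, by rw [← hb, sq]⟩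

lemma natCard_adjoinRoot_X_sq_sub_C (d : F) :
    Nat.card (AdjoinRoot (X ^ 2 - C d)) = Nat.card F ^ 2 := by
  have hmonic := monic_X_pow_sub_C d two_ne_zero
  have := hmonic.finite_adjoinRoot
  rw [Module.natCard_eq_pow_finrank (K := F), (AdjoinRoot.powerBasis' hmonic).finrank,
    AdjoinRoot.powerBasis'_dim, natDegree_X_pow_sub_C]

lemma exists_orderOf_eq_card_add_one_and_det_eq_one [Fintype F] {K : Type*} [Field K]
    [Finite K] (hK : Nat.card K = Fintype.card F ^ 2) {n : Type*} [Fintype n] [DecidableEq n]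
    (ρ : K →+* Matrix n n F) : ∃ g : K, orderOf g = Fintype.card F + 1 ∧ (ρ g).det = 1 := by
  set q := Fintype.card F
  have hq : 1 < q := Fintype.one_lt_card
  obtain ⟨g, hg⟩ := IsCyclic.exists_ofOrder_eq_natCard (α := Kˣ)
  have hcard : Nat.card Kˣ = (q - 1) * (q + 1) := by
    rw [Nat.card_units, hK]
    simpa [mul_comm] using Nat.sq_sub_sq q 1
  refine ⟨(g ^ (q - 1) : Kˣ), ?_, ?_⟩
  · rw [orderOf_units, orderOf_pow, hg, hcard, Nat.gcd_mul_right_left,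
      Nat.mul_div_cancel_left _ (by omega)]
  · have hdet : (ρ g).det ≠ 0 :=
      ((Matrix.isUnit_iff_isUnit_det _).1 ((Units.map ρ.toMonoidHom g).isUnit)).ne_zero
    rw [Units.val_pow_eq_pow_val, map_pow, det_pow, FiniteField.pow_card_sub_one_eq_one _ hdet]

/-- `!![0, d; 1, 0]` is the matrix of multiplication by `√d` in the basis `1, √d`. -/
noncomputable def adjoinSqrtToMatrix (d : F) :
    AdjoinRoot (X ^ 2 - C d) →ₐ[F] Matrix (Fin 2) (Fin 2) F :=
  Ideal.Quotient.liftₐ _ (aeval !![0, d; 1, 0]) fun p hp => by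
    obtain ⟨c, rfl⟩ := Ideal.mem_span_singleton.1 hp
    have hsq : aeval !![0, d; 1, 0] (X ^ 2 - C d) = 0 := by
      simp only [map_sub, aeval_C, sub_eq_zero, sq, Algebra.algebraMap_eq_smul_one]
      ext i j; fin_cases i <;> fin_cases j <;> simp
    rw [map_mul, hsq, zero_mul]

lemma adjoinSqrtToMatrix_root (d : F) :
    adjoinSqrtToMatrix d (AdjoinRoot.root _) = !![0, d; 1, 0] :=
  aeval_X _

lemma reflection_mul_sqrtMatrix (d s u : F) :
    !![s, -(d * u); u, -s] * !![0, d; 1, 0] = -(!![0, d; 1, 0] * !![s, -(d * u); u, -s]) := by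
  ext i j; fin_cases i <;> fin_cases j <;> simp <;> ring

lemma reflection_mul_self {d s u : F} (hsu : s ^ 2 - d * u ^ 2 = -1) :
    !![s, -(d * u); u, -s] * !![s, -(d * u); u, -s] = -1 := by
  ext i j; fin_cases i <;> fin_cases j <;> simp <;> first | linear_combination hsu | ring

lemma det_reflection {d s u : F} (hsu : s ^ 2 - d * u ^ 2 = -1) :
    (!![s, -(d * u); u, -s] : Matrix (Fin 2) (Fin 2) F).det = 1 := by
  rw [Matrix.det_fin_two_of]; linear_combination -hsu

lemma units_mul_adjoinSqrtToMatrix [Fintype F] (hF : ringChar F ≠ 2) {d : F} (hd : ¬IsSquare d)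
    (σ : (Matrix (Fin 2) (Fin 2) F)ˣ)
    (hσ : (σ : Matrix (Fin 2) (Fin 2) F) * !![0, d; 1, 0] = -(!![0, d; 1, 0] * σ))
    (α : AdjoinRoot (X ^ 2 - C d)) :
    σ * adjoinSqrtToMatrix d α = adjoinSqrtToMatrix d (α ^ Fintype.card F) * σ := by
  have hroot : AdjoinRoot.root (X ^ 2 - C d) ^ 2 = algebraMap F _ d := by
    have := AdjoinRoot.eval₂_root (X ^ 2 - C d)
    rwa [eval₂_sub, eval₂_X_pow, eval₂_C, sub_eq_zero, ← AdjoinRoot.algebraMap_eq] at this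
  have hconj :
      (MulSemiringAction.toAlgHom F _ (ConjAct.toConjAct σ)).comp (adjoinSqrtToMatrix d) =
        (adjoinSqrtToMatrix d).comp (FiniteField.frobeniusAlgHom F _) := by
    refine AdjoinRoot.algHom_ext ?_
    simp only [AlgHom.comp_apply, MulSemiringAction.toAlgHom_apply, ConjAct.units_smul_def,
      ConjAct.ofConjAct_toConjAct, FiniteField.frobeniusAlgHom_apply,
      pow_card_eq_neg_of_sq_eq_of_not_isSquare hF hd hroot, map_neg, adjoinSqrtToMatrix_root, hσ,
      neg_mul, mul_assoc, Units.mul_inv, mul_one]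
  have h := congr($hconj α)
  simp only [AlgHom.comp_apply, MulSemiringAction.toAlgHom_apply, ConjAct.units_smul_def,
    ConjAct.ofConjAct_toConjAct, FiniteField.frobeniusAlgHom_apply] at h
  rw [← h, Units.inv_mul_cancel_right]

lemma exists_orderOf_eq_card_add_one_and_det_adjoinSqrtToMatrix_eq_one [Fintype F] {d : F}
    (hd : ¬IsSquare d) : ∃ g : AdjoinRoot (X ^ 2 - C d),
      orderOf g = Fintype.card F + 1 ∧ (adjoinSqrtToMatrix d g).det = 1 := by
  have : Fact (Irreducible (X ^ 2 - C d)) := ⟨irreducible_X_sq_sub_C hd⟩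
  have := (monic_X_pow_sub_C d two_ne_zero).finite_adjoinRoot
  have := Module.finite_of_finite F (M := AdjoinRoot (X ^ 2 - C d))
  exact exists_orderOf_eq_card_add_one_and_det_eq_one
    (by rw [natCard_adjoinRoot_X_sq_sub_C, Nat.card_eq_fintype_card])
    (adjoinSqrtToMatrix d).toRingHom

end QuadraticExtension

lemma Matrix.SpecialLinearGroup.mem_center_iff_fin_two {R : Type*} [CommRing R] [IsDomain R]
    {A : SL(2, R)} : A ∈ Subgroup.center SL(2, R) ↔
      (A : Matrix (Fin 2) (Fin 2) R) = 1 ∨ (A : Matrix (Fin 2) (Fin 2) R) = -1 := by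
  rw [SpecialLinearGroup.mem_center_iff, Fintype.card_fin]
  constructor
  · rintro ⟨r, hr, hrA⟩
    rcases mul_self_eq_one_iff.1 ((sq r).symm.trans hr) with rfl | rfl
    · exact .inl (by rw [← hrA, map_one])
    · exact .inr (by rw [← hrA, map_neg, map_one])
  · rintro (h | h)
    · exact ⟨1, one_pow _, by rw [h, map_one]⟩
    · exact ⟨-1, by norm_num, by rw [h, map_neg, map_one]⟩

lemma Matrix.ProjectiveSpecialLinearGroup.orderOf_mk_eq_of_coe_eq {F K : Type*} [Field F]
    [Field K] (ρ : K →+* Matrix (Fin 2) (Fin 2) F) {A : SL(2, F)} {g : K}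
    (hA : (A : Matrix (Fin 2) (Fin 2) F) = ρ g) {m : ℕ} (hg : orderOf g = 2 * m) :
    orderOf (QuotientGroup.mk A : ProjectiveSpecialLinearGroup (Fin 2) F) = m := by
  have key (k : ℕ) :
      (QuotientGroup.mk A : ProjectiveSpecialLinearGroup (Fin 2) F) ^ k = 1 ↔ m ∣ k := by
    -- `A ^ k` is central iff `g ^ k = ±1` iff `g ^ (2 * k) = 1`
    rw [← QuotientGroup.mk_pow, QuotientGroup.eq_one_iff,
      SpecialLinearGroup.mem_center_iff_fin_two, SpecialLinearGroup.coe_pow, hA, ← map_pow,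
      ← map_one ρ, ← map_neg, ρ.injective.eq_iff, ρ.injective.eq_iff, ← mul_self_eq_one_iff,
      ← pow_add, ← two_mul, ← orderOf_dvd_iff_pow_eq_one, hg, Nat.mul_dvd_mul_iff_left two_pos]
  exact Nat.dvd_antisymm (orderOf_dvd_of_pow_eq_one ((key m).2 dvd_rfl))
    ((key _).1 (pow_orderOf_eq_one _))

theorem Matrix.ProjectiveSpecialLinearGroup.exists_orderOf_eq_and_conj_eq_inv {F : Type*}
    [Field F] [Fintype F] (hF : ringChar F ≠ 2) : ∃ a b : PSL(2, F),
      orderOf a = (Fintype.card F + 1) / 2 ∧ b ^ 2 = 1 ∧ b * a * b⁻¹ = a⁻¹ := by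
  set q := Fintype.card F
  obtain ⟨d, hd⟩ := FiniteField.exists_nonsquare hF
  have hd0 : d ≠ 0 := by rintro rfl; exact hd ⟨0, by ring⟩
  have : Fact (Irreducible (X ^ 2 - C d)) := ⟨irreducible_X_sq_sub_C hd⟩
  obtain ⟨g, hg, hdet⟩ := exists_orderOf_eq_card_add_one_and_det_adjoinSqrtToMatrix_eq_one hd
  obtain ⟨s, u, hsu⟩ := exists_sq_sub_mul_sq_eq hF hd0 (-1)
  let A : SL(2, F) := ⟨adjoinSqrtToMatrix d g, hdet⟩
  let S : SL(2, F) := ⟨!![s, -(d * u); u, -s], det_reflection hsu⟩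
  have hA : A ^ q * A = 1 := by
    rw [← pow_succ]
    apply Subtype.ext
    change adjoinSqrtToMatrix d g ^ (q + 1) = 1
    rw [← map_pow, ← hg, pow_orderOf_eq_one, map_one]
  have hSA : S * A = A ^ q * S := by
    apply Subtype.ext
    change _ * _ = adjoinSqrtToMatrix d g ^ q * _
    rw [← map_pow]
    exact units_mul_adjoinSqrtToMatrix hF hd S (reflection_mul_sqrtMatrix d s u) g
  have hS2 : ((S ^ 2 : SL(2, F)) : Matrix (Fin 2) (Fin 2) F) = -1 := by
    rw [SpecialLinearGroup.coe_pow, sq]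
    exact reflection_mul_self hsu
  refine ⟨A, S, orderOf_mk_eq_of_coe_eq (adjoinSqrtToMatrix d).toRingHom rfl ?_, ?_, ?_⟩
  · have := FiniteField.odd_card_of_char_ne_two hF
    omega
  · rw [← QuotientGroup.mk_pow, QuotientGroup.eq_one_iff,
      SpecialLinearGroup.mem_center_iff_fin_two]
    exact .inr hS2
  · rw [← QuotientGroup.mk_mul, ← QuotientGroup.mk_inv, ← QuotientGroup.mk_mul,
      ← QuotientGroup.mk_inv, mul_inv_eq_of_eq_mul hSA, eq_inv_of_mul_eq_one_left hA]

/-- For `q` odd with `q > 3`, `PSL(2, q)` contains a dihedral subgroup of order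
`q + 1` (i.e. `DihedralGroup ((q+1)/2)`, whose order is `q + 1`). -/
theorem psl_has_dihedral (F : Type*) [Field F] [Fintype F]
    (hodd : Odd (Fintype.card F)) (hq : 3 < Fintype.card F) :
    ∃ H : Subgroup (Matrix.ProjectiveSpecialLinearGroup (Fin 2) F),
      Nonempty (H ≃* DihedralGroup ((Fintype.card F + 1) / 2)) := by
  rw [Nat.odd_iff] at hodd
  have hF : ringChar F ≠ 2 := mt FiniteField.even_card_iff_char_two.1 (by omega)
  obtain ⟨a, b, ha, hb, hab⟩ := ProjectiveSpecialLinearGroup.exists_orderOf_eq_and_conj_eq_inv hF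
  exact exists_subgroup_mulEquiv_dihedralGroup ha (by omega) hb hab
end
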